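/- arXiv:2506.07513 — 4 statements merged into one kernel-verified Lean document; each statement's English description precedes it below -/
import Mathlib

section
/- Let z₁, …, zₙ be distinct complex numbers, let σ₁, …, σₙ be real numbers satisfying the neutrality condition σ₁ + ⋯ + σₙ = −2, and set λⱼ = σⱼ² + 2σⱼ for each j. Let M(z) = (az + b)/(cz + d) be a Möbius transformation with ad − bc = 1 and c·zⱼ + d ≠ 0 for all j. Then ∏_{j<k} |M(zⱼ) − M(z_k)|^{2σⱼσ_k} · ∏_j |c·zⱼ + d|^{−2λⱼ} = ∏_{j<k} |zⱼ − z_k|^{2σⱼσ_k}. Equivalently, since |M′(zⱼ)| = |c·zⱼ + d|^{−2}, the quantity ∏_{j<k} |M(zⱼ) − M(z_k)|^{2σⱼσ_k} · ∏_j |M′(zⱼ)|^{λⱼ} equals ∏_{j<k} |zⱼ − z_k|^{2σⱼσ_k}; that is, the modulus of the normalized Coulomb gas correlation is Möbius invariant as a differential of conformal dimension λⱼ at zⱼ. -/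
/-!
A Möbius map `M` with `ad - bc = 1` scales differences by
`M z - M w = (z - w) / ((cz + d)(cw + d))`, and `|M'(z)| = |cz + d|⁻²`. Hence each pair
`j < k` of the Coulomb gas picks up the factor `(|czⱼ + d| |czₖ + d|) ^ (-2σⱼσₖ)`. Collecting
these factors point by point, `zⱼ` receives `|czⱼ + d| ^ (-2σⱼ ∑_{k ≠ j} σₖ)`, and neutrality
turns `∑_{k ≠ j} σₖ` into `-2 - σⱼ`, so the exponent is exactly `2λⱼ`.
-/

open Finset

theorem mobius_sub_mobius {K : Type*} [Field K] {a b c d : K} (habcd : a * d - b * c = 1)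
    {z w : K} (hz : c * z + d ≠ 0) (hw : c * w + d ≠ 0) :
    (a * z + b) / (c * z + d) - (a * w + b) / (c * w + d) =
      (z - w) / ((c * z + d) * (c * w + d)) := by
  rw [div_sub_div _ _ hz hw, div_left_inj' (mul_ne_zero hz hw)]
  linear_combination (z - w) * habcd

theorem hasDerivAt_mobius {𝕜 : Type*} [NontriviallyNormedField 𝕜] {a b c d : 𝕜}
    (habcd : a * d - b * c = 1) {z : 𝕜} (hz : c * z + d ≠ 0) :
    HasDerivAt (fun w => (a * w + b) / (c * w + d)) ((c * z + d) ^ 2)⁻¹ z := by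
  have h := (((hasDerivAt_id z).const_mul a).add_const b).div
    (((hasDerivAt_id z).const_mul c).add_const d) hz
  have hnum : a * 1 * (c * id z + d) - (a * id z + b) * (c * 1) = 1 := by
    simp only [id]
    linear_combination habcd
  rwa [hnum, ← inv_eq_one_div] at h

theorem prod_Ioi_mul_rpow_eq_prod_rpow {ι : Type*} [LinearOrder ι] [Fintype ι]
    [LocallyFiniteOrderTop ι] [LocallyFiniteOrderBot ι] (A : ι → ℝ) (hA : ∀ i, 0 < A i)
    (σ : ι → ℝ) :
    ∏ i, ∏ j ∈ Ioi i, (A i * A j) ^ (2 * σ i * σ j) =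
      ∏ i, A i ^ (2 * σ i * (∑ j, σ j - σ i)) := by
  classical
  have hsplit : ∀ i j, (A i * A j) ^ (2 * σ i * σ j) =
      A i ^ (2 * σ j * σ i) * A j ^ (2 * σ i * σ j) := fun i j => by
    rw [Real.mul_rpow (hA i).le (hA j).le]
    congr 2
    ring
  have hcompl : ∀ i, ∑ j ∈ {i}ᶜ, 2 * σ j * σ i = 2 * σ i * (∑ j, σ j - σ i) := fun i => by
    rw [← sum_compl_add_sum {i} σ, sum_singleton, ← sum_mul, ← mul_sum]
    ring
  simp_rw [hsplit, prod_prod_Ioi_mul_eq_prod_prod_off_diag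
    (fun j i => A i ^ (2 * σ j * σ i)), ← Real.rpow_sum_of_pos (hA _), hcompl]

theorem coulomb_gas_modulus_mobius_invariant_general (n : ℕ) (z : Fin n → ℂ)
    (σ : Fin n → ℝ) (hσ : ∑ j, σ j = -2)
    (lam : Fin n → ℝ) (hlam : ∀ j, lam j = σ j ^ 2 + 2 * σ j)
    (a b c d : ℂ) (habcd : a * d - b * c = 1)
    (M : ℂ → ℂ) (hM : ∀ w, M w = (a * w + b) / (c * w + d))
    (hden : ∀ j, c * z j + d ≠ 0) :
    (∏ j, ∏ k ∈ Ioi j, ‖M (z j) - M (z k)‖ ^ (2 * σ j * σ k)) *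
        (∏ j, ‖c * z j + d‖ ^ (-(2 * lam j))) =
      (∏ j, ∏ k ∈ Ioi j, ‖z j - z k‖ ^ (2 * σ j * σ k)) ∧
    (∏ j, ∏ k ∈ Ioi j, ‖M (z j) - M (z k)‖ ^ (2 * σ j * σ k)) *
        (∏ j, ‖deriv M (z j)‖ ^ (lam j)) =
      ∏ j, ∏ k ∈ Ioi j, ‖z j - z k‖ ^ (2 * σ j * σ k) := by
  have hpos : ∀ j, 0 < ‖c * z j + d‖ := fun j => norm_pos_iff.2 (hden j)
  have hpair : ∀ j k, ‖M (z j) - M (z k)‖ = ‖z j - z k‖ / (‖c * z j + d‖ * ‖c * z k + d‖) :=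
    fun j k => by rw [hM, hM, mobius_sub_mobius habcd (hden j) (hden k), norm_div, norm_mul]
  have hweight : ∀ j, 2 * σ j * (∑ k, σ k - σ j) = -(2 * lam j) := fun j => by
    rw [hσ, hlam]; ring
  have hderiv : ∀ j, ‖deriv M (z j)‖ ^ lam j = ‖c * z j + d‖ ^ (-(2 * lam j)) := fun j => by
    rw [funext hM, (hasDerivAt_mobius habcd (hden j)).deriv, norm_inv, norm_pow,
      Real.inv_rpow (by positivity), ← Real.rpow_natCast_mul (hpos j).le,
      Real.rpow_neg (hpos j).le, Nat.cast_ofNat]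
  have hfirst : (∏ j, ∏ k ∈ Ioi j, ‖M (z j) - M (z k)‖ ^ (2 * σ j * σ k)) *
      (∏ j, ‖c * z j + d‖ ^ (-(2 * lam j))) =
      ∏ j, ∏ k ∈ Ioi j, ‖z j - z k‖ ^ (2 * σ j * σ k) := by
    simp_rw [hpair, Real.div_rpow (norm_nonneg _) (mul_nonneg (norm_nonneg _) (norm_nonneg _)),
      prod_div_distrib, prod_Ioi_mul_rpow_eq_prod_rpow _ hpos σ, hweight]
    exact div_mul_cancel₀ _ (prod_pos fun j _ => Real.rpow_pos_of_pos (hpos j) _).ne'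
  exact ⟨hfirst, by simpa only [hderiv] using hfirst⟩

/-- Möbius invariance of the modulus of the normalized Coulomb gas
correlation: for distinct points `z j`, real charges `σ j` with `∑ σ j = -2`
(neutrality), conformal dimensions `lam j = σ j ^ 2 + 2 σ j`, and a normalized Möbius
transformation `M(z) = (a z + b)/(c z + d)` with `a d - b c = 1` whose pole avoids the
`z j`, one has
`∏_{j<k} |M z_j - M z_k| ^ (2 σ_j σ_k) ⬝ ∏_j |c z_j + d| ^ (-(2 lam_j))
  = ∏_{j<k} |z_j - z_k| ^ (2 σ_j σ_k)`,
and equivalently, `∏_{j<k} |M z_j - M z_k| ^ (2 σ_j σ_k) ⬝ ∏_j |M' (z_j)| ^ (lam_j)`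
equals the same right-hand side. (Powers are real powers of nonnegative reals.) -/
theorem coulomb_gas_modulus_mobius_invariant (n : ℕ) (z : Fin n → ℂ)
    (hz : Function.Injective z)
    (σ : Fin n → ℝ) (hσ : ∑ j, σ j = -2)
    (lam : Fin n → ℝ) (hlam : ∀ j, lam j = σ j ^ 2 + 2 * σ j)
    (a b c d : ℂ) (habcd : a * d - b * c = 1)
    (M : ℂ → ℂ) (hM : ∀ w, M w = (a * w + b) / (c * w + d))
    (hden : ∀ j, c * z j + d ≠ 0) :
    (∏ j, ∏ k ∈ Ioi j, ‖M (z j) - M (z k)‖ ^ (2 * σ j * σ k)) *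
        (∏ j, ‖c * z j + d‖ ^ (-(2 * lam j))) =
      (∏ j, ∏ k ∈ Ioi j, ‖z j - z k‖ ^ (2 * σ j * σ k)) ∧
    (∏ j, ∏ k ∈ Ioi j, ‖M (z j) - M (z k)‖ ^ (2 * σ j * σ k)) *
        (∏ j, ‖deriv M (z j)‖ ^ (lam j)) =
      ∏ j, ∏ k ∈ Ioi j, ‖z j - z k‖ ^ (2 * σ j * σ k) :=
  coulomb_gas_modulus_mobius_invariant_general n z σ hσ lam hlam a b c d habcd M hM hden
end

section
/- Let n, m ≥ 0 and let h, x₁, …, xₙ, q₁, …, q_m be complex numbers that are pairwise distinct in the following sense: h ≠ xⱼ and h ≠ qₗ for all j, l; xⱼ ≠ x_k for j ≠ k; and xⱼ ≠ qₗ for all j, l. Let ν₁, …, νₙ and σ₁, …, σ_m be arbitrary complex numbers. Define D = Σⱼ 2νⱼ/(h − xⱼ), and for each k define V_k = ν_k·( Σ_{j≠k} 2/(x_k − xⱼ) + Σₗ 2σₗ/(x_k − qₗ) ) + Σ_{j≠k} 2νⱼ/(x_k − xⱼ), and for each l define Wₗ = Σⱼ 2νⱼ/(qₗ − xⱼ).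 Then the following identity holds: −Σⱼ 4νⱼ/(h − xⱼ)² + Σ_k (2/(h − x_k))·(D − V_k) + Σₗ (2σₗ/(h − qₗ))·(D − Wₗ) = 0. -/
open Finset

/-- The algebraic identity at the heart of the integral of motion for
multiple chordal SLE(0): with `D = ∑_j 2 ν_j/(h - x_j)`,
`V k = ν_k (∑_{j≠k} 2/(x_k - x_j) + ∑_l 2 σ_l/(x_k - q_l)) + ∑_{j≠k} 2 ν_j/(x_k - x_j)`
and `W l = ∑_j 2 ν_j/(q l - x_j)`, one has
`-∑_j 4 ν_j/(h - x_j)^2 + ∑_k (2/(h - x_k))(D - V k) + ∑_l (2 σ_l/(h - q_l))(D - W l) = 0`,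
provided `h`, the `x j` and the `q l` are pairwise distinct as indicated. -/
theorem sle0_integral_of_motion_identity (n m : ℕ) (h : ℂ)
    (x : Fin n → ℂ) (q : Fin m → ℂ) (ν : Fin n → ℂ) (σ : Fin m → ℂ)
    (hhx : ∀ j, h ≠ x j) (hhq : ∀ l, h ≠ q l)
    (hx : Function.Injective x) (hxq : ∀ j l, x j ≠ q l)
    (D : ℂ) (hD : D = ∑ j, 2 * ν j / (h - x j))
    (V : Fin n → ℂ)
    (hV : ∀ k, V k = ν k * ((∑ j ∈ univ.erase k, 2 / (x k - x j)) +
        ∑ l, 2 * σ l / (x k - q l)) + ∑ j ∈ univ.erase k, 2 * ν j / (x k - x j))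
    (W : Fin m → ℂ) (hW : ∀ l, W l = ∑ j, 2 * ν j / (q l - x j)) :
    -(∑ j, 4 * ν j / (h - x j) ^ 2) +
        (∑ k, 2 / (h - x k) * (D - V k)) +
        ∑ l, 2 * σ l / (h - q l) * (D - W l) = 0 := by
  have hhx' : ∀ j, h - x j ≠ 0 := fun j => sub_ne_zero.mpr (hhx j)
  have hhq' : ∀ l, h - q l ≠ 0 := fun l => sub_ne_zero.mpr (hhq l)
  have hxq' : ∀ j l, x j - q l ≠ 0 := fun j l => sub_ne_zero.mpr (hxq j l)
  have hqx' : ∀ l j, q l - x j ≠ 0 := fun l j => sub_ne_zero.mpr (Ne.symm (hxq j l))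
  have hxx' : ∀ j k : Fin n, j ≠ k → x j - x k ≠ 0 := fun j k hjk =>
    sub_ne_zero.mpr (fun e => hjk (hx e))
  set F : Fin n → Fin n → ℂ := fun k j =>
    -(4 * ν j / ((h - x j) * (x k - x j))) - 4 * ν k / ((h - x k) * (x k - x j)) with hF
  set G : Fin n → Fin m → ℂ := fun k l =>
    -(4 * ν k * σ l / ((h - x k) * (x k - q l))) with hG
  set H : Fin m → Fin n → ℂ := fun l j =>
    -(4 * σ l * ν j / ((h - x j) * (q l - x j))) with hH
  -- Claim C: the third sum
  have claimC : ∀ l, 2 * σ l / (h - q l) * (D - W l) = ∑ j, H l j := by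
    intro l
    rw [hD, hW, ← Finset.sum_sub_distrib, Finset.mul_sum]
    refine Finset.sum_congr rfl fun j _ => ?_
    simp only [hH]
    field_simp [hhq' l, hhx' j, hqx' l j]
    ring
  -- Claim B: the second sum
  have claimB : ∀ k, 2 / (h - x k) * (D - V k) =
      4 * ν k / (h - x k) ^ 2 + (∑ j ∈ univ.erase k, F k j) + ∑ l, G k l := by
    intro k
    have hDk : D = 2 * ν k / (h - x k) + ∑ j ∈ univ.erase k, 2 * ν j / (h - x j) := by
      rw [hD, ← Finset.add_sum_erase _ _ (Finset.mem_univ k)]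
    rw [hDk, hV]
    have e0 : 2 / (h - x k) * (2 * ν k / (h - x k)) = 4 * ν k / (h - x k) ^ 2 := by
      field_simp [hhx' k]
      ring
    have e2 : ∑ j ∈ univ.erase k, F k j =
        (∑ j ∈ univ.erase k, 2 * ν j / (h - x j) -
          (ν k * ∑ j ∈ univ.erase k, 2 / (x k - x j) +
            ∑ j ∈ univ.erase k, 2 * ν j / (x k - x j))) * (2 / (h - x k)) := by
      rw [Finset.mul_sum, ← Finset.sum_add_distrib, ← Finset.sum_sub_distrib,
        Finset.sum_mul]
      refine Finset.sum_congr rfl fun j hj => ?_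
      have hjk : x k - x j ≠ 0 := hxx' k j (Finset.ne_of_mem_erase hj).symm
      simp only [hF]
      field_simp [hhx' j, hhx' k, hjk]
      ring
    have e3 : ∑ l, G k l = -((ν k * ∑ l, 2 * σ l / (x k - q l)) * (2 / (h - x k))) := by
      rw [Finset.mul_sum, Finset.sum_mul, ← Finset.sum_neg_distrib]
      refine Finset.sum_congr rfl fun l _ => ?_
      simp only [hG]
      field_simp [hhx' k, hxq' k l]
      ring
    rw [e2, e3]
    linear_combination e0
  rw [Finset.sum_congr rfl (fun k _ => claimB k), Finset.sum_congr rfl (fun l _ => claimC l)]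
  rw [Finset.sum_add_distrib, Finset.sum_add_distrib]
  have hcancel : -(∑ j, 4 * ν j / (h - x j) ^ 2) + ∑ k, 4 * ν k / (h - x k) ^ 2 = 0 := by
    simp
  have hFzero : ∑ k, ∑ j ∈ univ.erase k, F k j = 0 := by
    have hswap : ∑ k, ∑ j ∈ univ.erase k, F k j = ∑ k, ∑ j ∈ univ.erase k, F j k := by
      refine Finset.sum_comm' ?_
      intro a b
      simp only [Finset.mem_univ, Finset.mem_erase, true_and, and_true]
      exact ⟨fun hh => Ne.symm hh, fun hh => Ne.symm hh⟩
    have key : (∑ k, ∑ j ∈ univ.erase k, F k j) + (∑ k, ∑ j ∈ univ.erase k, F k j) = 0 := by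
      nth_rewrite 2 [hswap]
      rw [← Finset.sum_add_distrib]
      refine Finset.sum_eq_zero fun k _ => ?_
      rw [← Finset.sum_add_distrib]
      refine Finset.sum_eq_zero fun j hj => ?_
      have hjk : x k - x j ≠ 0 := hxx' k j (Finset.ne_of_mem_erase hj).symm
      have hkj : x j - x k ≠ 0 := hxx' j k (Finset.ne_of_mem_erase hj)
      simp only [hF]
      field_simp [hhx' j, hhx' k, hjk, hkj]
      ring
    exact add_self_eq_zero.mp key
  have hGH : (∑ k, ∑ l, G k l) + ∑ l, ∑ j, H l j = 0 := by
    rw [Finset.sum_comm (f := fun l j => H l j), ← Finset.sum_add_distrib]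
    refine Finset.sum_eq_zero fun k _ => ?_
    rw [← Finset.sum_add_distrib]
    refine Finset.sum_eq_zero fun l _ => ?_
    simp only [hG, hH]
    field_simp [hhx' k, hxq' k l, hqx' l k]
    ring
  linear_combination hcancel + hFzero + hGH
end

section
/- Fix n, m ≥ 0, integers a₁, …, a_m, and a time t₀ ∈ ℝ. Let h, h₁ : ℝ → ℂ, xⱼ : ℝ → ℂ (1 ≤ j ≤ n), qₗ : ℝ → ℂ (1 ≤ l ≤ m), and νⱼ : ℝ → ℂ be functions. Assume that at t₀ the values h(t₀), x₁(t₀), …, xₙ(t₀), q₁(t₀), …, q_m(t₀) satisfy: h(t₀) ≠ xⱼ(t₀), h(t₀) ≠ qₗ(t₀), xⱼ(t₀) ≠ x_k(t₀) for j ≠ k, xⱼ(t₀) ≠ qₗ(t₀), and h₁(t₀) ≠ 0. Assume the following derivatives exist at t₀: h has derivative Σⱼ 2νⱼ(t₀)/(h(t₀) − xⱼ(t₀)); h₁ has derivative −h₁(t₀)·Σⱼ 2νⱼ(t₀)/(h(t₀) − xⱼ(t₀))²; each x_k has derivative ν_k(t₀)·( Σ_{j≠k} 2/(x_k(t₀)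 − xⱼ(t₀)) + Σₗ aₗ/(x_k(t₀) − qₗ(t₀)) ) + Σ_{j≠k} 2νⱼ(t₀)/(x_k(t₀) − xⱼ(t₀)); and each qₗ has derivative Σⱼ 2νⱼ(t₀)/(qₗ(t₀) − xⱼ(t₀)). Then the function N(t) = h₁(t)² · ∏_{k=1}^{n} (h(t) − x_k(t))² · ∏_{l=1}^{m} (h(t) − qₗ(t))^{aₗ} (negative integer powers interpreted as reciprocals) is differentiable at t₀ with derivative 0. -/
/-!
`N` is a product of powers of factors with explicit logarithmic derivatives, so `N' = N · L`
where `L` is the weighted sum of these logarithmic derivatives; it suffices to show `L = 0`.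
By the partial-fraction identity `1/(z - x) - 1/(w - x) = (z - w)/((z - x)(x - w))`, `L` splits
into diagonal terms `ν_j/(h - x_j)²`, cancelled by the contribution of `h₁`, a double sum over
pairs `j ≠ k` that is antisymmetric in `(j, k)`, and a double sum over pairs `(j, l)` that occurs
once from the factors `h - x_j` and once, with the opposite sign, from the factors `h - q_l`.
-/

open Finset

section LogDeriv

variable {𝕜 𝔸 𝕜' : Type*} [NontriviallyNormedField 𝕜] [NormedCommRing 𝔸] [NormedAlgebra 𝕜 𝔸]
  [NontriviallyNormedField 𝕜'] [NormedAlgebra 𝕜 𝕜'] {x : 𝕜}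

/-- The multiplicative form of `logDeriv f x = c`, which stays meaningful where `f x = 0`. -/
def HasLogDerivAt (f : 𝕜 → 𝔸) (c : 𝔸) (x : 𝕜) : Prop :=
  HasDerivAt f (f x * c) x

theorem HasDerivAt.hasLogDerivAt {f : 𝕜 → 𝕜'} {f' : 𝕜'} (hf : HasDerivAt f f' x)
    (hfx : f x ≠ 0) : HasLogDerivAt f (f' / f x) x :=
  hf.congr_deriv (mul_div_cancel₀ f' hfx).symm

theorem HasLogDerivAt.hasDerivAt_zero {f : 𝕜 → 𝔸} (hf : HasLogDerivAt f 0 x) :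
    HasDerivAt f 0 x := by
  simpa [HasLogDerivAt] using hf

theorem HasLogDerivAt.mul {f g : 𝕜 → 𝔸} {c d : 𝔸} (hf : HasLogDerivAt f c x)
    (hg : HasLogDerivAt g d x) : HasLogDerivAt (fun t => f t * g t) (c + d) x :=
  (HasDerivAt.fun_mul hf hg).congr_deriv (by ring)

theorem HasLogDerivAt.pow {f : 𝕜 → 𝔸} {c : 𝔸} (hf : HasLogDerivAt f c x) (n : ℕ) :
    HasLogDerivAt (fun t => f t ^ n) (n * c) x := by
  refine (HasDerivAt.fun_pow hf n).congr_deriv ?_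
  cases n with
  | zero => simp
  | succ n => push_cast; ring

theorem HasLogDerivAt.zpow {f : 𝕜 → 𝕜'} {c : 𝕜'} (hf : HasLogDerivAt f c x) (hfx : f x ≠ 0)
    (m : ℤ) : HasLogDerivAt (fun t => f t ^ m) (m * c) x := by
  refine ((hasDerivAt_zpow m (f x) (.inl hfx)).comp x hf).congr_deriv ?_
  rw [zpow_sub_one₀ hfx]
  field_simp

theorem HasLogDerivAt.finsetProd {ι : Type*} {s : Finset ι} {f : ι → 𝕜 → 𝔸} {c : ι → 𝔸}
    (hf : ∀ i ∈ s, HasLogDerivAt (f i) (c i) x) :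
    HasLogDerivAt (fun t => ∏ i ∈ s, f i t) (∑ i ∈ s, c i) x := by
  classical
  refine (HasDerivAt.fun_finsetProd hf).congr_deriv ?_
  rw [mul_sum]
  refine sum_congr rfl fun i hi => ?_
  rw [smul_eq_mul, ← mul_assoc, prod_erase_mul _ _ hi]

end LogDeriv

theorem Finset.sum_sum_erase_eq_zero_of_antisymm {ι M : Type*} [Fintype ι] [DecidableEq ι]
    [AddCommMonoid M] (f : ι → ι → M) (hf : ∀ i j, i ≠ j → f i j + f j i = 0) :
    ∑ i, ∑ j ∈ univ.erase i, f i j = 0 := by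
  rw [← sum_finset_product' univ.offDiag _ _ (by simp [ne_comm])]
  exact sum_involution (fun p _ => p.swap) (fun p hp => hf _ _ (mem_offDiag.1 hp).2.2)
    (fun p hp _ => by simpa [Prod.ext_iff, eq_comm] using (mem_offDiag.1 hp).2.2)
    (fun p hp => by simpa [ne_comm] using hp) (fun _ _ => rfl)

section Loewner

variable {K ι κ : Type*} [Field K]

def loewnerVelocity (s : Finset ι) (ν x : ι → K) (z : K) : K :=
  ∑ j ∈ s, 2 * ν j / (z - x j)

theorem loewnerVelocity_sub_loewnerVelocity {s : Finset ι} {ν x : ι → K} {z w : K}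
    (hz : ∀ j ∈ s, z ≠ x j) (hw : ∀ j ∈ s, x j ≠ w) :
    loewnerVelocity s ν x z - loewnerVelocity s ν x w
      = (z - w) * ∑ j ∈ s, 2 * (ν j / (z - x j)) / (x j - w) := by
  rw [loewnerVelocity, loewnerVelocity, ← sum_sub_distrib, mul_sum]
  refine sum_congr rfl fun j hj => ?_
  have := sub_ne_zero.2 (hz j hj)
  have := sub_ne_zero.2 (hw j hj)
  have : w - x j ≠ 0 := sub_ne_zero.2 (hw j hj).symm
  field_simp
  ring

variable [Fintype ι] [DecidableEq ι] [Fintype κ]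

theorem sle0_logDeriv_sum_eq_zero (H : K) (X V : ι → K) (Q A : κ → K)
    (hHX : ∀ j, H ≠ X j) (hHQ : ∀ l, H ≠ Q l) (hXX : ∀ j k, j ≠ k → X j ≠ X k)
    (hXQ : ∀ j l, X j ≠ Q l) :
    2 * -(∑ j, 2 * V j / (H - X j) ^ 2)
      + ∑ k, 2 * ((loewnerVelocity univ V X H
          - (V k * ((∑ j ∈ univ.erase k, 2 / (X k - X j)) + ∑ l, A l / (X k - Q l))
            + loewnerVelocity (univ.erase k) V X (X k))) / (H - X k))
      + ∑ l, A l * ((loewnerVelocity univ V X H - loewnerVelocity univ V X (Q l)) / (H - Q l))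
      = 0 := by
  set u : ι → K := fun j => V j / (H - X j)
  have hk : ∀ k, 2 * ((loewnerVelocity univ V X H
          - (V k * ((∑ j ∈ univ.erase k, 2 / (X k - X j)) + ∑ l, A l / (X k - Q l))
            + loewnerVelocity (univ.erase k) V X (X k))) / (H - X k))
      = 2 * (2 * V k / (H - X k) ^ 2) + 2 * ∑ j ∈ univ.erase k, 2 * (u j + u k) / (X j - X k)
        - 2 * ∑ l, u k * (A l / (X k - Q l)) := by
    intro k
    have hsplit : loewnerVelocity univ V X H
        = 2 * V k / (H - X k) + loewnerVelocity (univ.erase k) V X H :=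
      (add_sum_erase _ _ (mem_univ k)).symm
    have hsub := loewnerVelocity_sub_loewnerVelocity (s := univ.erase k) (ν := V)
      (fun j _ => hHX j) (fun j hj => hXX j k (ne_of_mem_erase hj))
    have hpair : ∑ j ∈ univ.erase k, 2 * (u j + u k) / (X j - X k)
        = ∑ j ∈ univ.erase k, 2 * u j / (X j - X k)
          - u k * ∑ j ∈ univ.erase k, 2 / (X k - X j) := by
      rw [mul_sum, ← sum_sub_distrib]
      refine sum_congr rfl fun j hj => ?_
      have := sub_ne_zero.2 (hXX j k (ne_of_mem_erase hj))
      have := sub_ne_zero.2 (hXX k j (ne_of_mem_erase hj).symm)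
      field_simp
      ring
    rw [hsplit, hpair, ← mul_sum, ← sub_add_cancel (loewnerVelocity (univ.erase k) V X H), hsub]
    generalize ∑ j ∈ univ.erase k, 2 * u j / (X j - X k) = T
    generalize ∑ j ∈ univ.erase k, 2 / (X k - X j) = P
    generalize ∑ l, A l / (X k - Q l) = R
    simp only [u]
    have := sub_ne_zero.2 (hHX k)
    field_simp
    ring
  have hl : ∀ l, A l * ((loewnerVelocity univ V X H - loewnerVelocity univ V X (Q l)) / (H - Q l))
      = 2 * ∑ j, u j * (A l / (X j - Q l)) := by
    intro l
    rw [loewnerVelocity_sub_loewnerVelocity (fun j _ => hHX j) (fun j _ => hXQ j l),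
      mul_div_cancel_left₀ _ (sub_ne_zero.2 (hHQ l)), mul_sum, mul_sum]
    refine sum_congr rfl fun j _ => ?_
    ring
  have hanti : ∑ k, ∑ j ∈ univ.erase k, 2 * (u j + u k) / (X j - X k) = 0 :=
    sum_sum_erase_eq_zero_of_antisymm (fun k j => 2 * (u j + u k) / (X j - X k)) fun k j _ => by
      rw [← neg_sub (X k) (X j), div_neg, add_comm (u k), neg_add_cancel]
  rw [sum_congr rfl fun k _ => hk k, sum_congr rfl fun l _ => hl l, ← mul_sum,
    sum_comm (s := univ (α := κ))]
  simp only [sum_add_distrib, sum_sub_distrib, ← mul_sum, hanti]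
  ring

theorem sle0_observable_hasDerivAt_zero_general (n m : ℕ) (a : Fin m → ℤ) (t₀ : ℝ)
    (h h₁ : ℝ → ℂ) (x : Fin n → ℝ → ℂ) (q : Fin m → ℝ → ℂ) (ν : Fin n → ℝ → ℂ)
    (hhx : ∀ j, h t₀ ≠ x j t₀) (hhq : ∀ l, h t₀ ≠ q l t₀)
    (hxx : ∀ j k, j ≠ k → x j t₀ ≠ x k t₀) (hxq : ∀ j l, x j t₀ ≠ q l t₀)
    (hdh : HasDerivAt h (∑ j, 2 * ν j t₀ / (h t₀ - x j t₀)) t₀)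
    (hdh₁ : HasDerivAt h₁ (-(h₁ t₀) * ∑ j, 2 * ν j t₀ / (h t₀ - x j t₀) ^ 2) t₀)
    (hdx : ∀ k, HasDerivAt (x k)
      (ν k t₀ * ((∑ j ∈ univ.erase k, 2 / (x k t₀ - x j t₀)) +
          ∑ l, (a l : ℂ) / (x k t₀ - q l t₀)) +
        ∑ j ∈ univ.erase k, 2 * ν j t₀ / (x k t₀ - x j t₀)) t₀)
    (hdq : ∀ l, HasDerivAt (q l) (∑ j, 2 * ν j t₀ / (q l t₀ - x j t₀)) t₀) :
    HasDerivAt (fun t => h₁ t ^ 2 * (∏ k, (h t - x k t) ^ 2) *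
      ∏ l, (h t - q l t) ^ (a l)) 0 t₀ := by
  have hlog₁ : HasLogDerivAt h₁ (-∑ j, 2 * ν j t₀ / (h t₀ - x j t₀) ^ 2) t₀ :=
    hdh₁.congr_deriv (by ring)
  have hlogx : ∀ k, HasLogDerivAt (fun t => h t - x k t) _ t₀ := fun k =>
    (hdh.sub (hdx k)).hasLogDerivAt (sub_ne_zero.2 (hhx k))
  have hlogq : ∀ l, HasLogDerivAt (fun t => h t - q l t) _ t₀ := fun l =>
    (hdh.sub (hdq l)).hasLogDerivAt (sub_ne_zero.2 (hhq l))
  have hN := ((hlog₁.pow 2).mul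
      (HasLogDerivAt.finsetProd (s := univ) fun k _ => (hlogx k).pow 2)).mul
    (HasLogDerivAt.finsetProd (s := univ) fun l _ => (hlogq l).zpow (sub_ne_zero.2 (hhq l)) (a l))
  refine HasLogDerivAt.hasDerivAt_zero ?_
  convert hN using 1
  have := sle0_logDeriv_sum_eq_zero (h t₀) (x · t₀) (ν · t₀) (q · t₀) (a · : Fin m → ℂ)
    hhx hhq hxx hxq
  push_cast
  exact this.symm

/-- The observable
`N(t) = h₁(t)^2 ⬝ ∏_k (h(t) - x_k(t))^2 ⬝ ∏_l (h(t) - q_l(t))^(a l)`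
has vanishing derivative at a time `t₀` at which the points are in general position and
the functions satisfy the multiple chordal SLE(0) Loewner evolution equations:
`h' = ∑_j 2 ν_j/(h - x_j)`, `h₁' = -h₁ ∑_j 2 ν_j/(h - x_j)^2`,
`x_k' = ν_k (∑_{j≠k} 2/(x_k - x_j) + ∑_l a_l/(x_k - q_l)) + ∑_{j≠k} 2 ν_j/(x_k - x_j)`,
`q_l' = ∑_j 2 ν_j/(q_l - x_j)`. -/
theorem sle0_observable_hasDerivAt_zero (n m : ℕ) (a : Fin m → ℤ) (t₀ : ℝ)
    (h h₁ : ℝ → ℂ) (x : Fin n → ℝ → ℂ) (q : Fin m → ℝ → ℂ) (ν : Fin n → ℝ → ℂ)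
    (hhx : ∀ j, h t₀ ≠ x j t₀) (hhq : ∀ l, h t₀ ≠ q l t₀)
    (hxx : ∀ j k, j ≠ k → x j t₀ ≠ x k t₀) (hxq : ∀ j l, x j t₀ ≠ q l t₀)
    (hh₁ : h₁ t₀ ≠ 0)
    (hdh : HasDerivAt h (∑ j, 2 * ν j t₀ / (h t₀ - x j t₀)) t₀)
    (hdh₁ : HasDerivAt h₁ (-(h₁ t₀) * ∑ j, 2 * ν j t₀ / (h t₀ - x j t₀) ^ 2) t₀)
    (hdx : ∀ k, HasDerivAt (x k)
      (ν k t₀ * ((∑ j ∈ univ.erase k, 2 / (x k t₀ - x j t₀)) +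
          ∑ l, (a l : ℂ) / (x k t₀ - q l t₀)) +
        ∑ j ∈ univ.erase k, 2 * ν j t₀ / (x k t₀ - x j t₀)) t₀)
    (hdq : ∀ l, HasDerivAt (q l) (∑ j, 2 * ν j t₀ / (q l t₀ - x j t₀)) t₀) :
    HasDerivAt (fun t => h₁ t ^ 2 * (∏ k, (h t - x k t) ^ 2) *
      ∏ l, (h t - q l t) ^ (a l)) 0 t₀ :=
  sle0_observable_hasDerivAt_zero_general n m a t₀ h h₁ x q ν hhx hhq hxx hxq hdh hdh₁ hdx hdq
end Loewner
end

section
/- Fix n, m ≥ 0 and integers a₁, …, a_m, and let I ⊆ ℝ be an interval. Let h, h₁ : ℝ → ℂ, xⱼ : ℝ → ℂ (1 ≤ j ≤ n), qₗ : ℝ → ℂ (1 ≤ l ≤ m), and νⱼ : ℝ → ℂ be functions such that for EVERY t ∈ I: the values h(t), x₁(t), …, xₙ(t), q₁(t), …, q_m(t) satisfy h(t) ≠ xⱼ(t), h(t) ≠ qₗ(t), xⱼ(t) ≠ x_k(t) for j ≠ k, xⱼ(t) ≠ qₗ(t), h₁(t) ≠ 0; h has derivative Σⱼ 2νⱼ(t)/(h(t)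 − xⱼ(t)) at t; h₁ has derivative −h₁(t)·Σⱼ 2νⱼ(t)/(h(t) − xⱼ(t))² at t; each x_k has derivative ν_k(t)·( Σ_{j≠k} 2/(x_k(t) − xⱼ(t)) + Σₗ aₗ/(x_k(t) − qₗ(t)) ) + Σ_{j≠k} 2νⱼ(t)/(x_k(t) − xⱼ(t)) at t; and each qₗ has derivative Σⱼ 2νⱼ(t)/(qₗ(t) − xⱼ(t)) at t. Then the function N(t) = h₁(t)² · ∏_{k=1}^{n} (h(t) − x_k(t))² · ∏_{l=1}^{m} (h(t) − qₗ(t))^{aₗ} is constant on I: N(s) = N(t) for all s, t ∈ I. -/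
/-!
Each factor of `N` has an explicit logarithmic derivative along the flow, so `N' = N · Σ`, where
`Σ` is a rational function of the points that vanishes identically. The difference of the Loewner
field at two points factorises through `(z - w)`. Hence each charge factor `(h - q_l)^{a_l}`
contributes exactly minus the charge part of the drift of the growth points; the diagonal terms
`4 ν_k / (h - x_k)²` of the growth factors `(h - x_k)²` cancel the contribution of `h₁²`; and
what remains is a double sum over pairs `j ≠ k` with symmetric numerator and antisymmetric
denominator, which is zero. A function with zero derivative on an interval is constant there.
-/

open Finset

section LoewnerAlgebra

variable {K ι κ : Type*} [Field K]

def loewnerField (s : Finset ι) (X V : ι → K) (z : K) : K :=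
  ∑ j ∈ s, 2 * V j / (z - X j)

theorem loewnerField_sub_loewnerField {s : Finset ι} {X V : ι → K} {z w : K}
    (hz : ∀ j ∈ s, z ≠ X j) (hw : ∀ j ∈ s, w ≠ X j) :
    loewnerField s X V z - loewnerField s X V w =
      (w - z) * ∑ j ∈ s, 2 * V j / ((z - X j) * (w - X j)) := by
  rw [loewnerField, loewnerField, ← sum_sub_distrib, mul_sum]
  refine sum_congr rfl fun j hj => ?_
  have := sub_ne_zero.2 (hz j hj)
  have := sub_ne_zero.2 (hw j hj)
  field_simp
  ring

variable [Fintype ι] [DecidableEq ι] [Fintype κ]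

theorem sum_sum_erase_eq_zero_of_antisymm [CharZero K] {g : ι → ι → K}
    (hg : ∀ j k, g j k = -g k j) : ∑ k, ∑ j ∈ univ.erase k, g k j = 0 := by
  have hdiag : ∀ k, g k k = 0 := fun k => CharZero.eq_neg_self_iff.1 (hg k k)
  simp only [sum_erase _ (hdiag _)]
  refine CharZero.eq_neg_self_iff.1 ?_
  calc ∑ k, ∑ j, g k j = ∑ k, ∑ j, g j k := sum_comm
    _ = ∑ k, ∑ j, -g k j := sum_congr rfl fun _ _ => sum_congr rfl fun _ _ => hg _ _
    _ = -∑ k, ∑ j, g k j := by simp only [sum_neg_distrib]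

variable {X V : ι → K} {H : K} {Q A : κ → K}

omit [DecidableEq ι] [Fintype κ] in
theorem charge_logDeriv_eq (hHX : ∀ j, H ≠ X j) (hHQ : ∀ l, H ≠ Q l)
    (hXQ : ∀ j l, X j ≠ Q l) (l : κ) :
    A l * (loewnerField univ X V H - loewnerField univ X V (Q l)) / (H - Q l) =
      ∑ j, 2 * V j / (H - X j) * (A l / (X j - Q l)) := by
  rw [loewnerField_sub_loewnerField (fun j _ => hHX j) (fun j _ => (hXQ j l).symm),
    mul_sum, mul_sum, sum_div]
  refine sum_congr rfl fun j _ => ?_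
  have := sub_ne_zero.2 (hHX j)
  have := sub_ne_zero.2 (hHQ l)
  have := sub_ne_zero.2 (hXQ j l)
  have := sub_ne_zero.2 (hXQ j l).symm
  field_simp
  ring

theorem growthPoint_logDeriv_eq (hHX : ∀ j, H ≠ X j) (hXX : ∀ j k, j ≠ k → X j ≠ X k)
    (k : ι) :
    2 * (loewnerField univ X V H - (V k * ((∑ j ∈ univ.erase k, 2 / (X k - X j)) +
        ∑ l, A l / (X k - Q l)) + loewnerField (univ.erase k) X V (X k))) / (H - X k) =
      4 * V k / (H - X k) ^ 2 - 2 * V k / (H - X k) * ∑ l, A l / (X k - Q l) -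
        ∑ j ∈ univ.erase k, 4 * (V j / (H - X j) + V k / (H - X k)) / (X k - X j) := by
  have hsplit : loewnerField univ X V H =
      2 * V k / (H - X k) + loewnerField (univ.erase k) X V H :=
    (add_sum_erase _ _ (mem_univ k)).symm
  have hshift := eq_add_of_sub_eq <| loewnerField_sub_loewnerField (s := univ.erase k) (V := V)
    (fun j _ => hHX j) (fun j hj => hXX k j (ne_of_mem_erase hj).symm)
  have hpair : ∑ j ∈ univ.erase k, 4 * (V j / (H - X j) + V k / (H - X k)) / (X k - X j) =
      2 * ∑ j ∈ univ.erase k, 2 * V j / ((H - X j) * (X k - X j)) +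
        2 * V k / (H - X k) * ∑ j ∈ univ.erase k, 2 / (X k - X j) := by
    rw [mul_sum, mul_sum, ← sum_add_distrib]
    exact sum_congr rfl fun j _ => by rw [← div_div]; ring
  rw [hsplit, hshift, hpair]
  have := sub_ne_zero.2 (hHX k)
  field_simp
  ring

theorem loewner_logDeriv_sum_eq_zero [CharZero K] (hHX : ∀ j, H ≠ X j) (hHQ : ∀ l, H ≠ Q l)
    (hXX : ∀ j k, j ≠ k → X j ≠ X k) (hXQ : ∀ j l, X j ≠ Q l) :
    -2 * (∑ j, 2 * V j / (H - X j) ^ 2) +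
      (∑ k, 2 * (loewnerField univ X V H - (V k * ((∑ j ∈ univ.erase k, 2 / (X k - X j)) +
        ∑ l, A l / (X k - Q l)) + loewnerField (univ.erase k) X V (X k))) / (H - X k)) +
      ∑ l, A l * (loewnerField univ X V H - loewnerField univ X V (Q l)) / (H - Q l) = 0 := by
  have hpairs : ∑ k, ∑ j ∈ univ.erase k,
      4 * (V j / (H - X j) + V k / (H - X k)) / (X k - X j) = 0 :=
    sum_sum_erase_eq_zero_of_antisymm fun k j => by rw [← div_neg, neg_sub, add_comm]
  have hcharges : ∑ l, ∑ j, 2 * V j / (H - X j) * (A l / (X j - Q l)) =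
      ∑ j, 2 * V j / (H - X j) * ∑ l, A l / (X j - Q l) := by
    rw [sum_comm]
    simp only [mul_sum]
  have hsquares : -2 * (∑ j, 2 * V j / (H - X j) ^ 2) = -∑ j, 4 * V j / (H - X j) ^ 2 := by
    rw [mul_sum, ← sum_neg_distrib]
    exact sum_congr rfl fun _ _ => by ring
  simp only [growthPoint_logDeriv_eq (A := A) hHX hXX, charge_logDeriv_eq hHX hHQ hXQ]
  rw [hcharges, hsquares, sum_sub_distrib, sum_sub_distrib, hpairs]
  ring

end LoewnerAlgebra

section LogDeriv

variable {𝕜 𝕜' : Type*} [NontriviallyNormedField 𝕜] [NontriviallyNormedField 𝕜']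
  [NormedAlgebra 𝕜 𝕜'] {f : 𝕜 → 𝕜'} {f' : 𝕜'} {t : 𝕜}

theorem HasDerivAt.zpow_logDeriv (hf : HasDerivAt f f' t) (hft : f t ≠ 0) (m : ℤ) :
    HasDerivAt (fun s => f s ^ m) (f t ^ m * (m * f' / f t)) t := by
  refine ((hasDerivAt_zpow m (f t) (Or.inl hft)).comp t hf).congr_deriv ?_
  rw [zpow_sub_one₀ hft]
  ring

theorem HasDerivAt.pow_logDeriv (hf : HasDerivAt f f' t) (hft : f t ≠ 0) (n : ℕ) :
    HasDerivAt (fun s => f s ^ n) (f t ^ n * (n * f' / f t)) t := by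
  simpa only [zpow_natCast, Int.cast_natCast] using hf.zpow_logDeriv hft n

theorem hasDerivAt_finset_prod_of_logDeriv {ι : Type*} (u : Finset ι) {g : ι → 𝕜 → 𝕜'}
    {r : ι → 𝕜'} (hg : ∀ i ∈ u, HasDerivAt (g i) (g i t * r i) t) :
    HasDerivAt (fun s => ∏ i ∈ u, g i s) ((∏ i ∈ u, g i t) * ∑ i ∈ u, r i) t := by
  induction u using Finset.cons_induction with
  | empty => simpa using hasDerivAt_const t (1 : 𝕜')
  | cons i u hi ih =>
    simp only [prod_cons, sum_cons]
    have hu := ih fun j hj => hg j (mem_cons_of_mem hj)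
    refine ((hg i (mem_cons_self i u)).mul hu).congr_deriv ?_
    ring

end LogDeriv

theorem Set.OrdConnected.eq_of_hasDerivAt_eq_zero {E : Type*} [NormedAddCommGroup E]
    [NormedSpace ℝ E] {I : Set ℝ} (hI : I.OrdConnected) {f : ℝ → E}
    (hf : ∀ t ∈ I, HasDerivAt f 0 t) {s t : ℝ} (hs : s ∈ I) (ht : t ∈ I) : f s = f t := by
  have := hI.convex.norm_image_sub_le_of_norm_hasDerivWithin_le (C := 0)
    (fun u hu => (hf u hu).hasDerivWithinAt) (fun _ _ => norm_zero.le) hs ht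
  rw [zero_mul, norm_le_zero_iff, sub_eq_zero] at this
  exact this.symm

theorem sle0_observable_integral_of_motion_general (n m : ℕ) (a : Fin m → ℤ)
    (I : Set ℝ) (hI : I.OrdConnected)
    (h h₁ : ℝ → ℂ) (x : Fin n → ℝ → ℂ) (q : Fin m → ℝ → ℂ) (ν : Fin n → ℝ → ℂ)
    (hhx : ∀ t ∈ I, ∀ j, h t ≠ x j t) (hhq : ∀ t ∈ I, ∀ l, h t ≠ q l t)
    (hxx : ∀ t ∈ I, ∀ j k, j ≠ k → x j t ≠ x k t)
    (hxq : ∀ t ∈ I, ∀ j l, x j t ≠ q l t)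
    (hdh : ∀ t ∈ I, HasDerivAt h (∑ j, 2 * ν j t / (h t - x j t)) t)
    (hdh₁ : ∀ t ∈ I, HasDerivAt h₁ (-(h₁ t) * ∑ j, 2 * ν j t / (h t - x j t) ^ 2) t)
    (hdx : ∀ t ∈ I, ∀ k, HasDerivAt (x k)
      (ν k t * ((∑ j ∈ univ.erase k, 2 / (x k t - x j t)) +
          ∑ l, (a l : ℂ) / (x k t - q l t)) +
        ∑ j ∈ univ.erase k, 2 * ν j t / (x k t - x j t)) t)
    (hdq : ∀ t ∈ I, ∀ l, HasDerivAt (q l) (∑ j, 2 * ν j t / (q l t - x j t)) t) :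
    ∀ s ∈ I, ∀ t ∈ I,
      h₁ s ^ 2 * (∏ k, (h s - x k s) ^ 2) * (∏ l, (h s - q l s) ^ (a l)) =
        h₁ t ^ 2 * (∏ k, (h t - x k t) ^ 2) * ∏ l, (h t - q l t) ^ (a l) := by
  refine fun s hs t ht => hI.eq_of_hasDerivAt_eq_zero (f := fun w =>
    h₁ w ^ 2 * (∏ k, (h w - x k w) ^ 2) * ∏ l, (h w - q l w) ^ (a l)) (fun u hu => ?_) hs ht
  have hH₁ : HasDerivAt (fun s => h₁ s ^ 2)
      (h₁ u ^ 2 * (-2 * ∑ j, 2 * ν j u / (h u - x j u) ^ 2)) u :=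
    ((hdh₁ u hu).pow 2).congr_deriv (by ring)
  have hX := hasDerivAt_finset_prod_of_logDeriv univ (g := fun k w => (h w - x k w) ^ 2)
    fun k _ => ((hdh u hu).sub (hdx u hu k)).pow_logDeriv (sub_ne_zero.2 (hhx u hu k)) 2
  have hQ := hasDerivAt_finset_prod_of_logDeriv univ (g := fun l w => (h w - q l w) ^ a l)
    fun l _ => ((hdh u hu).sub (hdq u hu l)).zpow_logDeriv (sub_ne_zero.2 (hhq u hu l)) (a l)
  have hsum := loewner_logDeriv_sum_eq_zero (V := fun j => ν j u) (A := fun l => (a l : ℂ))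
    (hhx u hu) (hhq u hu) (hxx u hu) (hxq u hu)
  refine ((hH₁.mul hX).mul hQ).congr_deriv ?_
  simp only [loewnerField, Nat.cast_ofNat, Pi.sub_apply, Pi.mul_apply] at hsum ⊢
  linear_combination (h₁ u ^ 2 * (∏ k, (h u - x k u) ^ 2) * ∏ l, (h u - q l u) ^ (a l)) * hsum

/-- Integral of motion for the multiple chordal SLE(0) Loewner flow:
if on an interval `I` the points stay in general position and the functions satisfy the
Loewner evolution equations (as in the SLE(0) Loewner chain with charges `a l = 2 σ l`),
then `N(t) = h₁(t)^2 ⬝ ∏_k (h(t) - x_k(t))^2 ⬝ ∏_l (h(t) - q_l(t))^(a l)` is constant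
on `I`. -/
theorem sle0_observable_integral_of_motion (n m : ℕ) (a : Fin m → ℤ)
    (I : Set ℝ) (hI : I.OrdConnected)
    (h h₁ : ℝ → ℂ) (x : Fin n → ℝ → ℂ) (q : Fin m → ℝ → ℂ) (ν : Fin n → ℝ → ℂ)
    (hhx : ∀ t ∈ I, ∀ j, h t ≠ x j t) (hhq : ∀ t ∈ I, ∀ l, h t ≠ q l t)
    (hxx : ∀ t ∈ I, ∀ j k, j ≠ k → x j t ≠ x k t)
    (hxq : ∀ t ∈ I, ∀ j l, x j t ≠ q l t)
    (hh₁ : ∀ t ∈ I, h₁ t ≠ 0)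
    (hdh : ∀ t ∈ I, HasDerivAt h (∑ j, 2 * ν j t / (h t - x j t)) t)
    (hdh₁ : ∀ t ∈ I, HasDerivAt h₁ (-(h₁ t) * ∑ j, 2 * ν j t / (h t - x j t) ^ 2) t)
    (hdx : ∀ t ∈ I, ∀ k, HasDerivAt (x k)
      (ν k t * ((∑ j ∈ univ.erase k, 2 / (x k t - x j t)) +
          ∑ l, (a l : ℂ) / (x k t - q l t)) +
        ∑ j ∈ univ.erase k, 2 * ν j t / (x k t - x j t)) t)
    (hdq : ∀ t ∈ I, ∀ l, HasDerivAt (q l) (∑ j, 2 * ν j t / (q l t - x j t)) t) :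
    ∀ s ∈ I, ∀ t ∈ I,
      h₁ s ^ 2 * (∏ k, (h s - x k s) ^ 2) * (∏ l, (h s - q l s) ^ (a l)) =
        h₁ t ^ 2 * (∏ k, (h t - x k t) ^ 2) * ∏ l, (h t - q l t) ^ (a l) :=
  sle0_observable_integral_of_motion_general n m a I hI h h₁ x q ν hhx hhq hxx hxq hdh hdh₁ hdx hdq
end
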